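/- Let f : ℝ² → ℝ be smooth and G-invariant (f(p+nq,q)=f(p,q) for all n ∈ ℤ). For q ≠ 0 and n ≥ 1, define α_n(q) = 2∫_{-1/2}^{1/2} f(uq, q) cos(2nπu) du and β_n(q) = 2∫_{-1/2}^{1/2} f(uq, q) sin(2nπu) du. Then α_n and β_n extend to smooth functions on ℝ that vanish at q = 0 together with all their derivatives. -/

import Mathlib

/-!
Smoothness of `α_n` and `β_n` is differentiation under the integral sign. For flatness, integrate
by parts in `u`: since `p ↦ f (p, q)` is `q`-periodic, the boundary terms cancel, and the
coefficient of `f` becomes `q / (2nπ)` times a coefficient, with shifted phase, of `∂f/∂p`, which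
is again smooth and invariant. Hence every such coefficient has the form `q ↦ q * h q` with `h` of
the same kind, and `(q h)⁽ⁱ⁺¹⁾(0) = (i + 1) h⁽ⁱ⁾(0)` gives all derivatives at `0` by induction on `i`.
-/

open Real Set
open scoped ContDiff

theorem iteratedDeriv_succ_mul_self_zero {𝕜 : Type*} [NontriviallyNormedField 𝕜] {h : 𝕜 → 𝕜}
    (i : ℕ) (hh : ContDiffAt 𝕜 (i + 1) h 0) :
    iteratedDeriv (i + 1) (fun x => x * h x) 0 = (i + 1) * iteratedDeriv i h 0 := by
  rw [iteratedDeriv_fun_mul contDiffAt_id (by exact_mod_cast hh), Finset.sum_eq_single 1]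
  · simp [iteratedDeriv_fun_id_zero]
  · intro j _ hj
    simp [iteratedDeriv_fun_id_zero, hj]
  · simp

section ParametricIntegral

variable {E : Type*} [NormedAddCommGroup E] [NormedSpace ℝ E]
  {F : ℝ × ℝ → E}

theorem hasDerivAt_intervalIntegral_param (hF : ContDiff ℝ 1 F) (a b q₀ : ℝ) :
    HasDerivAt (fun q => ∫ u in a..b, F (u, q)) (∫ u in a..b, fderiv ℝ F (u, q₀) (0, 1)) q₀ := by
  have hF' : Continuous fun p => fderiv ℝ F p (0, 1) :=
    (hF.continuous_fderiv one_ne_zero).clm_apply continuous_const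
  have hslice : ∀ {G : ℝ × ℝ → E}, Continuous G → ∀ q, Continuous fun u => G (u, q) :=
    fun hG q => hG.comp (continuous_id.prodMk continuous_const)
  obtain ⟨M, hM⟩ := (isCompact_uIcc.prod (isCompact_closedBall q₀ 1)).exists_bound_of_continuousOn
    hF'.continuousOn
  refine (intervalIntegral.hasDerivAt_integral_of_dominated_loc_of_deriv_le
    (F := fun q u => F (u, q)) (bound := fun _ => M) (Metric.ball_mem_nhds q₀ zero_lt_one)
    (.of_forall fun q => (hslice hF.continuous q).aestronglyMeasurable)
    ((hslice hF.continuous q₀).intervalIntegrable a b)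
    (hslice hF' q₀).aestronglyMeasurable
    (.of_forall fun u hu q hq => hM _ ⟨uIoc_subset_uIcc hu, Metric.ball_subset_closedBall hq⟩)
    intervalIntegrable_const
    (.of_forall fun u _ q _ => ?_)).2
  exact ((hF.differentiable one_ne_zero (u, q)).hasFDerivAt).comp_hasDerivAt q
    ((hasDerivAt_const q u).prodMk (hasDerivAt_id q))

theorem contDiff_intervalIntegral_param {n : ℕ∞} (hF : ContDiff ℝ n F) (a b : ℝ) :
    ContDiff ℝ n fun q => ∫ u in a..b, F (u, q) := by
  suffices h : ∀ (k : ℕ) {G : ℝ × ℝ → E}, ContDiff ℝ k G →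
      ContDiff ℝ k fun q => ∫ u in a..b, G (u, q) from
    contDiff_iff_forall_nat_le.2 fun k hk => h k (hF.of_le (by exact_mod_cast hk))
  intro k
  induction k with
  | zero =>
    intro G hG
    exact contDiff_zero.2 <| intervalIntegral.continuous_parametric_intervalIntegral_of_continuous'
      (f := fun q u => G (u, q)) (hG.continuous.comp (continuous_snd.prodMk continuous_fst)) a b
  | succ k ih =>
    intro G hG
    have hG1 : ContDiff ℝ 1 G := hG.of_le (by exact_mod_cast Nat.le_add_left 1 k)
    have hderiv := hasDerivAt_intervalIntegral_param hG1 a b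
    rw [Nat.cast_succ] at hG ⊢
    refine contDiff_succ_iff_deriv.2 ⟨fun q => (hderiv q).differentiableAt, by simp, ?_⟩
    rw [funext fun q => (hderiv q).deriv]
    exact ih ((hG.fderiv_right (by exact_mod_cast le_rfl)).clm_apply contDiff_const)

end ParametricIntegral

section ShearInvariant

def IsShearInvariant (g : ℝ × ℝ → ℝ) : Prop :=
  ∀ p q, g (p + q, q) = g (p, q)

noncomputable def partialFst (g : ℝ × ℝ → ℝ) : ℝ × ℝ → ℝ :=
  fun p => fderiv ℝ g p (1, 0)

/-- `α_n = 2 * phaseCoeff f n 0` and `β_n = 2 * phaseCoeff f n (-(π / 2))`; the phase makes the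
family closed under integration by parts. -/
noncomputable def phaseCoeff (g : ℝ × ℝ → ℝ) (n : ℕ) (c q : ℝ) : ℝ :=
  ∫ u in (-(1:ℝ)/2)..(1/2), g (u * q, q) * cos (2 * n * π * u + c)

variable {g : ℝ × ℝ → ℝ}

theorem hasDerivAt_partialFst {s q : ℝ} (hg : DifferentiableAt ℝ g (s, q)) :
    HasDerivAt (fun s => g (s, q)) (partialFst g (s, q)) s :=
  hg.hasFDerivAt.comp_hasDerivAt s ((hasDerivAt_id s).prodMk (hasDerivAt_const s q))

theorem ContDiff.partialFst (hg : ContDiff ℝ ∞ g) : ContDiff ℝ ∞ (partialFst g) :=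
  (hg.fderiv_right (by simp)).clm_apply contDiff_const

theorem IsShearInvariant.partialFst (hg : Differentiable ℝ g) (hinv : IsShearInvariant g) :
    IsShearInvariant (partialFst g) := by
  intro p q
  have hshift : HasDerivAt (fun s => g (s + q, q)) (_root_.partialFst g (p + q, q)) p := by
    simpa using (hasDerivAt_partialFst (hg _)).comp_add_const p q
  rw [show (fun s => g (s + q, q)) = fun s => g (s, q) from funext fun s => hinv s q] at hshift
  exact hshift.unique (hasDerivAt_partialFst (hg _))

theorem contDiff_phaseCoeff {k : ℕ∞} (hg : ContDiff ℝ k g) (n : ℕ) (c : ℝ) :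
    ContDiff ℝ k (phaseCoeff g n c) :=
  contDiff_intervalIntegral_param (F := fun p => g (p.1 * p.2, p.2) * cos (2 * n * π * p.1 + c))
    (by fun_prop) _ _

theorem phaseCoeff_eq_mul_phaseCoeff_partialFst (hg : ContDiff ℝ 1 g) (hinv : IsShearInvariant g)
    {n : ℕ} (hn : n ≠ 0) (c q : ℝ) :
    phaseCoeff g n c q = -(2 * n * π)⁻¹ * (q * phaseCoeff (partialFst g) n (c - π / 2) q) := by
  obtain ⟨κ, hκ⟩ : ∃ κ : ℝ, 2 * n * π = κ := ⟨_, rfl⟩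
  have hκ0 : κ ≠ 0 := by rw [← hκ]; positivity
  have hu : ∀ x, HasDerivAt (fun x => g (x * q, q)) (partialFst g (x * q, q) * q) x := fun x =>
    (hasDerivAt_partialFst (hg.differentiable one_ne_zero _)).comp x (hasDerivAt_mul_const q)
  have hv : ∀ x, HasDerivAt (fun x => sin (κ * x + c) / κ) (cos (κ * x + c)) x := by
    intro x
    simpa [hκ0] using ((((hasDerivAt_id x).const_mul κ).add_const c).sin.div_const κ)
  have hcont : Continuous (partialFst g) :=
    (hg.continuous_fderiv one_ne_zero).clm_apply continuous_const
  have hibp := intervalIntegral.integral_mul_deriv_eq_deriv_mul (a := -(1:ℝ)/2) (b := 1/2)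
    (fun x _ => hu x) (fun x _ => hv x) (Continuous.intervalIntegrable (by fun_prop) _ _)
    (Continuous.intervalIntegrable (by fun_prop) _ _)
  have hboundary : g (1 / 2 * q, q) * (sin (κ * (1 / 2) + c) / κ)
      - g (-1 / 2 * q, q) * (sin (κ * (-1 / 2) + c) / κ) = 0 := by
    rw [show 1 / 2 * q = -1 / 2 * q + q by ring, hinv,
      show κ * (1 / 2) + c = κ * (-1 / 2) + c + n * (2 * π) by rw [← hκ]; ring,
      sin_add_nat_mul_two_pi, sub_self]
  have hrhs : ∫ x in (-(1:ℝ)/2)..(1/2), partialFst g (x * q, q) * q * (sin (κ * x + c) / κ) =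
      κ⁻¹ * (q * phaseCoeff (partialFst g) n (c - π / 2) q) := by
    rw [phaseCoeff, ← intervalIntegral.integral_const_mul, ← intervalIntegral.integral_const_mul]
    congr 1 with x
    rw [hκ, show κ * x + (c - π / 2) = κ * x + c - π / 2 by ring, cos_sub_pi_div_two]
    field_simp
  rw [phaseCoeff, hκ, hibp, hboundary, hrhs]
  ring

theorem iteratedDeriv_phaseCoeff_zero (hg : ContDiff ℝ ∞ g) (hinv : IsShearInvariant g)
    {n : ℕ} (hn : n ≠ 0) (i : ℕ) (c : ℝ) : iteratedDeriv i (phaseCoeff g n c) 0 = 0 := by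
  induction i generalizing g c with
  | zero =>
    rw [iteratedDeriv_zero, phaseCoeff_eq_mul_phaseCoeff_partialFst (hg.of_le (by simp)) hinv hn,
      zero_mul, mul_zero]
  | succ i ih =>
    rw [funext (phaseCoeff_eq_mul_phaseCoeff_partialFst (hg.of_le (by simp)) hinv hn c),
      iteratedDeriv_const_mul_field, iteratedDeriv_succ_mul_self_zero i
        ((contDiff_phaseCoeff hg.partialFst n _).contDiffAt.of_le (by exact_mod_cast le_top)),
      ih hg.partialFst (hinv.partialFst (hg.differentiable (by simp))), mul_zero, mul_zero]

end ShearInvariant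

theorem stmt4 (f : ℝ × ℝ → ℝ) (hf : ContDiff ℝ (⊤ : ℕ∞) f)
    (hinv : ∀ (n : ℤ) (p q : ℝ), f (p + n * q, q) = f (p, q))
    (n : ℕ) (hn : 1 ≤ n)
    (α β : ℝ → ℝ)
    (hα : ∀ q : ℝ, α q =
      2 * ∫ u in (-(1:ℝ)/2)..(1/2), f (u * q, q) * Real.cos (2 * n * π * u))
    (hβ : ∀ q : ℝ, β q =
      2 * ∫ u in (-(1:ℝ)/2)..(1/2), f (u * q, q) * Real.sin (2 * n * π * u)) :
    ContDiff ℝ (⊤ : ℕ∞) α ∧ ContDiff ℝ (⊤ : ℕ∞) β ∧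
      (∀ i : ℕ, iteratedDeriv i α 0 = 0) ∧ (∀ i : ℕ, iteratedDeriv i β 0 = 0) := by
  have hshear : IsShearInvariant f := fun p q => by simpa using hinv 1 p q
  have hn0 : n ≠ 0 := Nat.one_le_iff_ne_zero.1 hn
  have hα' : α = fun q => 2 * phaseCoeff f n 0 q := funext fun q => by
    simp only [hα, phaseCoeff, add_zero]
  have hβ' : β = fun q => 2 * phaseCoeff f n (-(π / 2)) q := funext fun q => by
    simp only [hβ, phaseCoeff, ← sub_eq_add_neg, cos_sub_pi_div_two]
  subst hα' hβ'
  refine ⟨contDiff_const.mul (contDiff_phaseCoeff hf n _),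
    contDiff_const.mul (contDiff_phaseCoeff hf n _), fun i => ?_, fun i => ?_⟩ <;>
  rw [iteratedDeriv_const_mul_field, iteratedDeriv_phaseCoeff_zero hf hshear hn0, mul_zero]
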